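/- arXiv:math/0406340 — 2 statements merged into one kernel-verified Lean document; each statement's English description precedes it below -/
import Mathlib

section
/- Let W_1 be the word (-x_1, x_1) and recursively W_k = W_{k-1} · (x_k, -x_k) · reverse(W_{k-1}). For the 2x2 matrix product M(U) = Π over letters u of U of [[0, u],[1, 1]], one has M(W_n) = [[X̃_n - X_{n-1}^2, 1 - X_n],[X_{n-1}^2, X_n]], where X_n = 1 + Σ_{j=1}^{n} Π_{i=1}^{j} x_i^{2^(j-i)} and X̃_n = 1 + Σ_{j=1}^{n-1} Π_{i=1}^{j} x_i^{2^(j-i)} - Π_{i=1}^{n} x_i^{2^(n-i)}. -/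
variable {R : Type*} [CommRing R]

/-- `X k = 1 + ∑_{j=1}^k ∏_{i=1}^j x_i^{2^(j-i)}`. -/
def Xpoly (x : ℕ → R) (k : ℕ) : R :=
  1 + ∑ j ∈ Finset.Icc 1 k, ∏ i ∈ Finset.Icc 1 j, x i ^ 2 ^ (j - i)

/-- `X̃ k = 1 + ∑_{j=1}^{k-1} ∏_{i=1}^j x_i^{2^(j-i)} - ∏_{i=1}^k x_i^{2^(k-i)}`. -/
def Xtilde (x : ℕ → R) (k : ℕ) : R :=
  1 + ∑ j ∈ Finset.Icc 1 (k - 1), ∏ i ∈ Finset.Icc 1 j, x i ^ 2 ^ (j - i)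
    - ∏ i ∈ Finset.Icc 1 k, x i ^ 2 ^ (k - i)

/-- The paperfolding words: `W 1 = (-x₁, x₁)`, `W (k+1) = W k ⬝ (x_{k+1}, -x_{k+1}) ⬝ reverse (W k)`. -/
def Wword (x : ℕ → R) : ℕ → List R
  | 0 => []
  | 1 => [-x 1, x 1]
  | (k + 2) => Wword x (k + 1) ++ [x (k + 2), -x (k + 2)] ++ (Wword x (k + 1)).reverse

/-- `M(U)`: the ordered product of the matrices `[[0,u],[1,1]]` over the letters `u` of `U`. -/
def Mword (U : List R) : Matrix (Fin 2) (Fin 2) R :=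
  (U.map fun u => !![0, u; 1, 1]).prod


section Aux

variable {R : Type*} [CommRing R]

private def Ppoly (x : ℕ → R) (k : ℕ) : R := ∏ i ∈ Finset.Icc 1 k, x i ^ 2 ^ (k - i)

private lemma Ppoly_succ (x : ℕ → R) (k : ℕ) :
    Ppoly x (k + 1) = x (k + 1) * Ppoly x k ^ 2 := by
  unfold Ppoly
  rw [Finset.prod_Icc_succ_top (Nat.le_add_left 1 k)]
  have h : ∀ i ∈ Finset.Icc 1 k, x i ^ 2 ^ (k + 1 - i) = (x i ^ 2 ^ (k - i)) ^ 2 := by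
    intro i hi
    have hik : i ≤ k := (Finset.mem_Icc.mp hi).2
    rw [← pow_mul]
    congr 1
    have : k + 1 - i = (k - i) + 1 := by omega
    rw [this, pow_succ]
  rw [Finset.prod_congr rfl h, ← Finset.prod_pow]
  simp [mul_comm]

private lemma Xpoly_succ (x : ℕ → R) (k : ℕ) :
    Xpoly x (k + 1) = Xpoly x k + Ppoly x (k + 1) := by
  unfold Xpoly Ppoly
  rw [Finset.sum_Icc_succ_top (Nat.le_add_left 1 k)]
  ring

private lemma Mword_append (U V : List R) : Mword (U ++ V) = Mword U * Mword V := by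
  simp [Mword]

private lemma rev_W_succ (x : ℕ → R) (k : ℕ) :
    (Wword x (k + 2)).reverse
      = Wword x (k + 1) ++ [-x (k + 2), x (k + 2)] ++ (Wword x (k + 1)).reverse := by
  show (Wword x (k + 1) ++ [x (k + 2), -x (k + 2)] ++ (Wword x (k + 1)).reverse).reverse = _
  simp

private lemma key (x : ℕ → R) (k : ℕ) :
    Mword (Wword x (k + 1)) =
      !![Xpoly x k - Ppoly x (k + 1) - Xpoly x k ^ 2, 1 - (Xpoly x k + Ppoly x (k + 1));
         Xpoly x k ^ 2, Xpoly x k + Ppoly x (k + 1)] ∧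
    Mword ((Wword x (k + 1)).reverse) =
      !![Xpoly x k + Ppoly x (k + 1) - Xpoly x k ^ 2, 1 - (Xpoly x k - Ppoly x (k + 1));
         Xpoly x k ^ 2, Xpoly x k - Ppoly x (k + 1)] := by
  induction k with
  | zero =>
      have hX : Xpoly x 0 = (1 : R) := by simp [Xpoly]
      have hP : Ppoly x 1 = x 1 := by simp [Ppoly]
      rw [hX, hP]
      constructor <;>
      · show Mword [_, _] = _
        simp [Mword]
        ring
  | succ k ih =>
      obtain ⟨ih1, ih2⟩ := ih
      have hW : Wword x (k + 2)
          = Wword x (k + 1) ++ [x (k + 2), -x (k + 2)] ++ (Wword x (k + 1)).reverse := rfl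
      have hMid : ∀ a b : R, Mword [a, b] = !![0, a; 1, 1] * !![0, b; 1, 1] := by
        intro a b; simp [Mword]
      rw [Xpoly_succ, Ppoly_succ x (k + 1)]
      set a := Xpoly x k with ha
      set q := Ppoly x (k + 1) with hq
      set y := x (k + 2) with hy
      constructor
      · rw [hW, Mword_append, Mword_append, ih1, ih2, hMid]
        ext i j
        fin_cases i <;> fin_cases j <;>
          simp [Matrix.mul_apply, Fin.sum_univ_two] <;> ring
      · rw [rev_W_succ, Mword_append, Mword_append, ih1, ih2, hMid]
        ext i j
        fin_cases i <;> fin_cases j <;>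
          simp [Matrix.mul_apply, Fin.sum_univ_two] <;> ring

end Aux

/-- `M(W_n) = [[X̃_n - X_{n-1}², 1 - X_n],[X_{n-1}², X_n]]`. -/
theorem Mword_Wword (x : ℕ → R) (n : ℕ) (hn : 1 ≤ n) :
    Mword (Wword x n) =
      !![Xtilde x n - Xpoly x (n - 1) ^ 2, 1 - Xpoly x n;
         Xpoly x (n - 1) ^ 2, Xpoly x n] := by
  obtain ⟨k, rfl⟩ : ∃ k, n = k + 1 := ⟨n - 1, by omega⟩
  have h := (key x k).1
  have hXt : Xtilde x (k + 1) = Xpoly x k - Ppoly x (k + 1) := by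
    unfold Xtilde Xpoly Ppoly
    simp only [Nat.add_sub_cancel]
  have hX : Xpoly x (k + 1) = Xpoly x k + Ppoly x (k + 1) := Xpoly_succ x k
  simp only [Nat.add_sub_cancel, hXt, hX, h]
end

section
/- Let H be the Hankel matrix with entries h_{i,j} = μ_{i+j} where μ_m = 1 if m+1 is a power of 2 and μ_m = 0 otherwise. Let s be the sign sequence with s_0=1, s_{2i}=(-1)^i s_i, s_{2i+1}=s_i; let D_s = diag(s_0, s_1, ...), D_a = diag(1,-1,1,-1,...), and L the lower-triangular matrix with l_{i,j} = binom(2i+1, i-j) mod 2. Then H = D_s · L · D_a · L^t · D_s (as an identity of n×n matrices for every n). -/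
/-!
Write `ℓ i k` (`lEntry`) for the entries of `L` and `G i j = ∑ₖ (-1)ᵏ ℓ i k ℓ j k` (`altGram`)
for those of `L D_a Lᵀ`. Lucas' theorem for `p = 2` makes `ℓ` self-similar:
`ℓ (2a+1) (2c) = ℓ (2a+1) (2c+1) = ℓ a c`, while `ℓ (2a) (2c)` and `ℓ (2a) (2c+1)` are `ℓ a c`
or `0` according to the parity of `a + c`. Pairing the columns `2c, 2c+1` in `G` gives
`G (2a+1) (2b+1) = 0`, `G (2a+1) (2b) = (-1)ᵇ G a b` and `G (2a) (2b) = [a + b even] (-1)ᵃ G a b`.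
The numbers `s i s j μ (i+j)` obey the same recursion, so `G = D_s H D_s` by induction on `i + j`,
and `s i = ±1` turns this into `H = D_s L D_a Lᵀ D_s`.
-/

open Finset Matrix

theorem choose_two_mul_add_one_mod_two (n m : ℕ) :
    (2 * n + 1).choose m % 2 = n.choose (m / 2) % 2 := by
  have lucas :=
    Choose.choose_modEq_choose_mod_mul_choose_div_nat (n := 2 * n + 1) (k := m) (p := 2)
  rw [show (2 * n + 1) % 2 = 1 by omega, show (2 * n + 1) / 2 = n by omega] at lucas
  rcases Nat.mod_two_eq_zero_or_one m with h | h <;> simpa [h, Nat.ModEq] using lucas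

theorem choose_two_mul_mod_two (n m : ℕ) :
    (2 * n).choose m % 2 = if Even m then n.choose (m / 2) % 2 else 0 := by
  have lucas := Choose.choose_modEq_choose_mod_mul_choose_div_nat (n := 2 * n) (k := m) (p := 2)
  rw [Nat.mul_mod_right, Nat.mul_div_cancel_left _ two_pos] at lucas
  rcases Nat.even_or_odd m with h | h
  · simpa [h, Nat.even_iff.1 h, Nat.ModEq] using lucas
  · simpa [Nat.not_even_iff_odd.2 h, Nat.odd_iff.1 h, Nat.ModEq] using lucas

def lEntry (i k : ℕ) : ℤ :=
  if k ≤ i then (((2 * i + 1).choose (i - k) % 2 : ℕ) : ℤ) else 0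

lemma lEntry_of_lt {i k : ℕ} (h : i < k) : lEntry i k = 0 := if_neg (by omega)

lemma lEntry_two_mul_add_one_two_mul (a c : ℕ) : lEntry (2 * a + 1) (2 * c) = lEntry a c := by
  unfold lEntry
  simp only [choose_two_mul_add_one_mod_two]
  split_ifs <;> first | omega | (congr 3; omega)

lemma lEntry_two_mul_add_one_two_mul_add_one (a c : ℕ) :
    lEntry (2 * a + 1) (2 * c + 1) = lEntry a c := by
  unfold lEntry
  simp only [choose_two_mul_add_one_mod_two]
  split_ifs <;> first | omega | (congr 3; omega)

lemma lEntry_two_mul_two_mul (a c : ℕ) :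
    lEntry (2 * a) (2 * c) = if Even (a + c) then lEntry a c else 0 := by
  unfold lEntry
  simp only [choose_two_mul_add_one_mod_two, choose_two_mul_mod_two, Nat.even_iff]
  split_ifs <;> first | rfl | omega | (congr 3; omega)

lemma lEntry_two_mul_two_mul_add_one (a c : ℕ) :
    lEntry (2 * a) (2 * c + 1) = if Even (a + c) then 0 else lEntry a c := by
  unfold lEntry
  simp only [choose_two_mul_add_one_mod_two, choose_two_mul_mod_two, Nat.even_iff]
  split_ifs <;> first | rfl | omega | (congr 3; omega)

lemma sum_range_two_mul {M : Type*} [AddCommMonoid M] (f : ℕ → M) (N : ℕ) :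
    ∑ k ∈ range (2 * N), f k = ∑ c ∈ range N, (f (2 * c) + f (2 * c + 1)) := by
  induction N with
  | zero => simp
  | succ N ih => rw [mul_add_one, sum_range_succ, sum_range_succ, sum_range_succ, ih, add_assoc]

def altGram (i j : ℕ) : ℤ := ∑ k ∈ range (i + 1), (-1) ^ k * lEntry i k * lEntry j k

lemma sum_range_eq_altGram {i N : ℕ} (j : ℕ) (h : i < N) :
    ∑ k ∈ range N, (-1) ^ k * lEntry i k * lEntry j k = altGram i j := by
  refine (sum_subset (range_subset_range.2 h) fun k _ hk => ?_).symm
  rw [lEntry_of_lt (by simpa using hk), mul_zero, zero_mul]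

lemma altGram_comm (i j : ℕ) : altGram i j = altGram j i := by
  rw [← sum_range_eq_altGram j (show i < i + j + 1 by omega),
    ← sum_range_eq_altGram i (show j < i + j + 1 by omega)]
  exact sum_congr rfl fun k _ => mul_right_comm _ _ _

lemma altGram_eq_sum_pairs {i N : ℕ} (j : ℕ) (h : i < 2 * N) :
    altGram i j = ∑ c ∈ range N,
      (lEntry i (2 * c) * lEntry j (2 * c) - lEntry i (2 * c + 1) * lEntry j (2 * c + 1)) := by
  rw [← sum_range_eq_altGram j h, sum_range_two_mul]
  refine sum_congr rfl fun c _ => ?_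
  simp only [pow_succ, pow_mul]
  ring

lemma altGram_two_mul_add_one_two_mul_add_one (a b : ℕ) :
    altGram (2 * a + 1) (2 * b + 1) = 0 := by
  rw [altGram_eq_sum_pairs (N := a + 1) _ (by omega)]
  refine sum_eq_zero fun c _ => ?_
  simp only [lEntry_two_mul_add_one_two_mul, lEntry_two_mul_add_one_two_mul_add_one, sub_self]

lemma altGram_two_mul_add_one_two_mul (a b : ℕ) :
    altGram (2 * a + 1) (2 * b) = (-1) ^ b * altGram a b := by
  rw [altGram_eq_sum_pairs (N := a + 1) _ (by omega), ← sum_range_eq_altGram b (lt_add_one a),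
    mul_sum]
  refine sum_congr rfl fun c _ => ?_
  simp only [lEntry_two_mul_add_one_two_mul, lEntry_two_mul_add_one_two_mul_add_one,
    lEntry_two_mul_two_mul, lEntry_two_mul_two_mul_add_one]
  rw [← mul_assoc, ← mul_assoc, ← pow_add, neg_one_pow_eq_ite, add_comm b]
  split_ifs <;> ring

lemma altGram_two_mul_two_mul (a b : ℕ) :
    altGram (2 * a) (2 * b) = if Even (a + b) then (-1) ^ a * altGram a b else 0 := by
  rw [altGram_eq_sum_pairs (N := a + 1) _ (by omega), ← sum_range_eq_altGram b (lt_add_one a),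
    mul_sum]
  simp only [lEntry_two_mul_two_mul, lEntry_two_mul_two_mul_add_one]
  split_ifs with hab
  · refine sum_congr rfl fun c _ => ?_
    rw [← mul_assoc, ← mul_assoc, ← pow_add, neg_one_pow_eq_ite]
    simp only [Nat.even_add] at hab ⊢
    split_ifs <;> first | (exfalso; tauto) | ring
  · refine sum_eq_zero fun c _ => ?_
    simp only [Nat.even_add] at hab ⊢
    split_ifs <;> first | (exfalso; tauto) | ring

open Classical in
noncomputable def mu (m : ℕ) : ℤ := if ∃ k : ℕ, m + 1 = 2 ^ k then 1 else 0

lemma mu_zero : mu 0 = 1 := if_pos ⟨0, rfl⟩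

open Classical in
lemma mu_two_mul_add_one (m : ℕ) : mu (2 * m + 1) = mu m := by
  refine if_congr ⟨fun ⟨k, hk⟩ => ?_, fun ⟨k, hk⟩ => ⟨k + 1, by rw [pow_succ]; omega⟩⟩ rfl rfl
  cases k with
  | zero => simp at hk
  | succ k => exact ⟨k, by rw [pow_succ] at hk; omega⟩

lemma mu_two_mul {m : ℕ} (hm : m ≠ 0) : mu (2 * m) = 0 := by
  refine if_neg fun ⟨k, hk⟩ => ?_
  cases k with
  | zero => simp at hk; omega
  | succ k => rw [pow_succ] at hk; omega

lemma sign_seq_mul_self_eq_one {R : Type*} [CommRing R] {s : ℕ → R} (h0 : s 0 = 1)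
    (heven : ∀ b, s (2 * b) = (-1) ^ b * s b) (hodd : ∀ b, s (2 * b + 1) = s b) (i : ℕ) :
    s i * s i = 1 := by
  induction i using Nat.strong_induction_on with
  | _ i ih =>
    obtain ⟨b, rfl | rfl⟩ := Nat.even_or_odd' i
    · rcases Nat.eq_zero_or_pos b with rfl | hb
      · simp [h0]
      · rw [heven, mul_mul_mul_comm, ← pow_add, ← two_mul, pow_mul, neg_one_sq, one_pow,
          one_mul, ih b (by omega)]
    · rw [hodd, ih b (by omega)]

theorem altGram_eq_mul_mu {s : ℕ → ℤ} (h0 : s 0 = 1) (heven : ∀ b, s (2 * b) = (-1) ^ b * s b)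
    (hodd : ∀ b, s (2 * b + 1) = s b) (i j : ℕ) : altGram i j = s i * s j * mu (i + j) := by
  obtain ⟨a, rfl | rfl⟩ := Nat.even_or_odd' i <;> obtain ⟨b, rfl | rfl⟩ := Nat.even_or_odd' j
  · rcases eq_or_ne (a + b) 0 with hab | hab
    · obtain ⟨rfl, rfl⟩ : a = 0 ∧ b = 0 := by omega
      simp [altGram, lEntry, h0, mu_zero]
    · rw [altGram_two_mul_two_mul, ← mul_add, mu_two_mul hab, mul_zero]
      split_ifs with hab_even
      · obtain ⟨t, ht⟩ := hab_even
        rw [altGram_eq_mul_mu h0 heven hodd a b, ht, ← two_mul, mu_two_mul (by omega), mul_zero,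
          mul_zero]
      · rfl
  · rw [altGram_comm, altGram_two_mul_add_one_two_mul, altGram_eq_mul_mu h0 heven hodd b a,
      heven, hodd, show 2 * a + (2 * b + 1) = 2 * (a + b) + 1 by ring, mu_two_mul_add_one,
      add_comm b]
    ring
  · rw [altGram_two_mul_add_one_two_mul, altGram_eq_mul_mu h0 heven hodd a b, heven, hodd,
      show 2 * a + 1 + 2 * b = 2 * (a + b) + 1 by ring, mu_two_mul_add_one]
    ring
  · rw [altGram_two_mul_add_one_two_mul_add_one,
      show 2 * a + 1 + (2 * b + 1) = 2 * (a + b + 1) by ring, mu_two_mul (by omega), mul_zero]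
termination_by i + j

def lMatrix (n : ℕ) : Matrix (Fin n) (Fin n) ℤ := of fun i k => lEntry i k

lemma lMatrix_mul_diagonal_mul_transpose_apply {n : ℕ} (i j : Fin n) :
    (lMatrix n * diagonal (fun k : Fin n => (-1) ^ (k : ℕ)) * (lMatrix n)ᵀ :
      Matrix (Fin n) (Fin n) ℤ) i j = altGram i j := by
  rw [mul_apply]
  simp only [mul_diagonal, transpose_apply, lMatrix, of_apply]
  rw [← sum_range_eq_altGram j i.isLt, ← Fin.sum_univ_eq_sum_range]
  exact sum_congr rfl fun k _ => by ring

open Classical in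
/-- `H = D_s · L · D_a · Lᵗ · D_s` as `n×n` matrices for every `n`, where `H` is the Hankel
matrix of the sequence `μ_m = 1` iff `m+1` is a power of `2`, `s` is the sign sequence with
`s 0 = 1`, `s (2i) = (-1)^i s i`, `s (2i+1) = s i`, `D_a = diag(1,-1,1,-1,…)` and `L` is the
lower-triangular matrix with entries `binom(2i+1, i-j) mod 2`. -/
theorem hankel_LU_decomposition (s : ℕ → ℤ) (h0 : s 0 = 1)
    (heven : ∀ i, 1 ≤ i → s (2 * i) = (-1) ^ i * s i)
    (hodd : ∀ i, s (2 * i + 1) = s i) (n : ℕ) :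
    (Matrix.of fun i j : Fin n =>
        if ∃ k : ℕ, (i : ℕ) + (j : ℕ) + 1 = 2 ^ k then (1 : ℤ) else 0) =
      Matrix.diagonal (fun i : Fin n => s i) *
        (Matrix.of fun i j : Fin n =>
          if (j : ℕ) ≤ (i : ℕ) then (((2 * (i : ℕ) + 1).choose ((i : ℕ) - (j : ℕ)) % 2 : ℕ) : ℤ)
          else 0) *
        Matrix.diagonal (fun i : Fin n => (-1) ^ (i : ℕ)) *
        Matrix.transpose (Matrix.of fun i j : Fin n =>
          if (j : ℕ) ≤ (i : ℕ) then (((2 * (i : ℕ) + 1).choose ((i : ℕ) - (j : ℕ)) % 2 : ℕ) : ℤ)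
          else 0) *
        Matrix.diagonal (fun i : Fin n => s i) := by
  have heven' (b : ℕ) : s (2 * b) = (-1) ^ b * s b := by
    rcases Nat.eq_zero_or_pos b with rfl | hb
    · simp
    · exact heven b hb
  ext i j
  change mu (i + j) = (diagonal _ * lMatrix n * _ * (lMatrix n)ᵀ * diagonal _ :
    Matrix (Fin n) (Fin n) ℤ) i j
  rw [mul_diagonal, mul_assoc, mul_assoc, diagonal_mul,
    ← mul_assoc, lMatrix_mul_diagonal_mul_transpose_apply, altGram_eq_mul_mu h0 heven' hodd]
  calc mu (i + j)
      = (s i * s i) * (s j * s j) * mu (i + j) := by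
        rw [sign_seq_mul_self_eq_one h0 heven' hodd, sign_seq_mul_self_eq_one h0 heven' hodd,
          one_mul, one_mul]
    _ = s i * (s i * s j * mu (i + j)) * s j := by ring
end
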